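/- In the Confounded Features model X₁ ~ N(0,1), X₂ = aX₁ + ν₂, Y = bX₁ + cX₂ + ν_Y with ν₂, ν_Y ~ N(0,1) all independent, if the target observes only X₂ (X₁ fully missing), then the optimal linear predictor on X₂ alone has coefficient ab/(a²+1) + c, the target risk of the full source predictor [b, c] restricted to X₂ satisfies r^t(β^s_*) = b² + 1, and Var(Y) = b² + 2abc + a²c² + c² + 1. In particular, setting a = -b/c gives r^t(β^s_*)/Var(Y) = (b²+1)/(c²+1), which can exceed any τ > 1 for suitable b, c. -/

import Mathlib

/-!
The noises `ν₁, ν₂, ν_Y` are centred, of unit variance and pairwise independent, hence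
orthonormal in `L²(μ)`. Every second moment of linear combinations of them is therefore the dot
product of the coefficient vectors: in these coordinates `X₂ = (a, 1, 0)`,
`Y = (b + ca, c, 1)` and `Y - cX₂ = (b, 0, 1)`, and all claims become algebra. For `a = -b/c`
the coefficient of `ν₁` in `Y` vanishes, so `Var Y = c² + 1`.
-/

open MeasureTheory ProbabilityTheory

namespace ProbabilityTheory.HasLaw

variable {Ω : Type*} [MeasurableSpace Ω] {μ : Measure Ω} {X : Ω → ℝ}

theorem of_map_eq {ρ : Measure ℝ} [IsProbabilityMeasure ρ] (h : μ.map X = ρ) :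
    HasLaw X ρ μ :=
  ⟨.of_map_ne_zero (h ▸ IsProbabilityMeasure.ne_zero ρ), h⟩

variable {m : ℝ} {v : NNReal}

theorem integral_eq_of_gaussianReal (h : HasLaw X (gaussianReal m v) μ) : μ[X] = m :=
  h.integral_eq.trans integral_id_gaussianReal

theorem memLp_two_of_gaussianReal (h : HasLaw X (gaussianReal m v) μ) : MemLp X 2 μ :=
  (memLp_map_measure_iff aestronglyMeasurable_id h.aemeasurable).mp
    (h.map_eq ▸ memLp_id_gaussianReal 2)

theorem integral_sq_eq_of_gaussianReal (h : HasLaw X (gaussianReal 0 v) μ) :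
    ∫ ω, X ω ^ 2 ∂μ = v := by
  rw [← variance_of_integral_eq_zero h.aemeasurable h.integral_eq_of_gaussianReal,
    h.variance_eq, variance_id_gaussianReal]

end ProbabilityTheory.HasLaw

section Orthonormal

variable {Ω ι : Type*} [MeasurableSpace Ω] {μ : Measure Ω} [DecidableEq ι] {ν : ι → Ω → ℝ}

theorem integral_mul_eq_ite_of_indepFun (hind : Pairwise fun i j => IndepFun (ν i) (ν j) μ)
    (hmeas : ∀ i, AEStronglyMeasurable (ν i) μ) (hmean : ∀ i, μ[ν i] = 0)
    (hsq : ∀ i, ∫ ω, ν i ω ^ 2 ∂μ = 1) (i j : ι) :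
    ∫ ω, ν i ω * ν j ω ∂μ = if i = j then 1 else 0 := by
  split_ifs with hij
  · subst hij
    simpa only [sq] using hsq i
  · simpa [hmean] using (hind hij).integral_mul_eq_mul_integral (hmeas i) (hmeas j)

variable [Fintype ι]

theorem integral_sum_mul_sum_of_orthonormal (hL2 : ∀ i, MemLp (ν i) 2 μ)
    (horth : ∀ i j, ∫ ω, ν i ω * ν j ω ∂μ = if i = j then 1 else 0) (p q : ι → ℝ) :
    ∫ ω, (∑ i, p i * ν i ω) * (∑ j, q j * ν j ω) ∂μ = ∑ i, p i * q i := by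
  have hint : ∀ i j, Integrable (fun ω => p i * q j * (ν i ω * ν j ω)) μ :=
    fun i j => ((hL2 i).integrable_mul (hL2 j)).const_mul _
  calc ∫ ω, (∑ i, p i * ν i ω) * (∑ j, q j * ν j ω) ∂μ
      = ∫ ω, ∑ i, ∑ j, p i * q j * (ν i ω * ν j ω) ∂μ := by
        simp_rw [Finset.sum_mul_sum, mul_mul_mul_comm]
    _ = ∑ i, ∑ j, p i * q j * ∫ ω, ν i ω * ν j ω ∂μ := by
        rw [integral_finsetSum _ fun i _ => integrable_finsetSum _ fun j _ => hint i j]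
        simp_rw [integral_finsetSum _ fun j _ => hint _ j, integral_const_mul]
    _ = ∑ i, p i * q i := by simp [horth]

theorem variance_sum_of_orthonormal [IsFiniteMeasure μ] (hL2 : ∀ i, MemLp (ν i) 2 μ)
    (hmean : ∀ i, μ[ν i] = 0)
    (horth : ∀ i j, ∫ ω, ν i ω * ν j ω ∂μ = if i = j then 1 else 0) (p : ι → ℝ) :
    variance (fun ω => ∑ i, p i * ν i ω) μ = ∑ i, p i ^ 2 := by
  have hint : ∀ i, Integrable (fun ω => p i * ν i ω) μ :=
    fun i => ((hL2 i).integrable one_le_two).const_mul _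
  have hcentered : ∫ ω, ∑ i, p i * ν i ω ∂μ = 0 := by
    simp [integral_finsetSum _ fun i _ => hint i, integral_const_mul, hmean]
  rw [variance_of_integral_eq_zero (Finset.aemeasurable_fun_sum _ fun i _ => (hint i).aemeasurable)
    hcentered]
  simp_rw [sq]
  exact integral_sum_mul_sum_of_orthonormal hL2 horth p p

end Orthonormal

/-- In the Confounded Features model (`X₁ = ν₁`, `X₂ = aX₁ + ν₂`,
`Y = bX₁ + cX₂ + ν_Y`, standard Gaussian independent noises), with the target
observing only `X₂`: the optimal linear predictor on `X₂` alone has coefficient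
`ab/(a²+1) + c`; the target risk of the source predictor `[b, c]` restricted to
`X₂` is `b² + 1`; `Var(Y) = b² + 2abc + a²c² + c² + 1`; setting `a = -b/c` gives
risk ratio `(b²+1)/(c²+1)`, which can exceed any `τ > 1` for suitable `b, c`. -/
theorem confounded_features_nonadaptivity
    {Ω : Type*} [MeasurableSpace Ω] (μ : Measure Ω) [IsProbabilityMeasure μ]
    (ν₁ ν₂ νY : Ω → ℝ) (a b c : ℝ) (hc : c ≠ 0)
    (hν₁ : Measure.map ν₁ μ = gaussianReal 0 1)
    (hν₂ : Measure.map ν₂ μ = gaussianReal 0 1)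
    (hνY : Measure.map νY μ = gaussianReal 0 1)
    (hindep : iIndepFun
      ![ν₁, ν₂, νY] μ)
    (X₂ Y : Ω → ℝ)
    (hX₂ : X₂ = fun ω => a * ν₁ ω + ν₂ ω)
    (hY : Y = fun ω => b * ν₁ ω + c * X₂ ω + νY ω) :
    ((∫ ω, X₂ ω * Y ω ∂μ) / (∫ ω, X₂ ω ^ 2 ∂μ) = a * b / (a ^ 2 + 1) + c) ∧
    (∫ ω, (Y ω - c * X₂ ω) ^ 2 ∂μ = b ^ 2 + 1) ∧
    (variance Y μ = b ^ 2 + 2 * a * b * c + a ^ 2 * c ^ 2 + c ^ 2 + 1) ∧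
    (a = -b / c →
      (∫ ω, (Y ω - c * X₂ ω) ^ 2 ∂μ) / variance Y μ = (b ^ 2 + 1) / (c ^ 2 + 1)) ∧
    (∀ τ : ℝ, 1 < τ → ∃ b' c' : ℝ, c' ≠ 0 ∧ (b' ^ 2 + 1) / (c' ^ 2 + 1) > τ) := by
  set ν := ![ν₁, ν₂, νY]
  have hlaw : ∀ i, HasLaw (ν i) (gaussianReal 0 1) μ := by
    intro i; fin_cases i
    exacts [.of_map_eq hν₁, .of_map_eq hν₂, .of_map_eq hνY]
  have hL2 i := (hlaw i).memLp_two_of_gaussianReal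
  have hmean i := (hlaw i).integral_eq_of_gaussianReal
  have horth := integral_mul_eq_ite_of_indepFun (fun i j hij => hindep.indepFun hij)
    (fun i => (hlaw i).aemeasurable.aestronglyMeasurable) hmean
    (fun i => (hlaw i).integral_sq_eq_of_gaussianReal)
  have hcoords : ∀ (p q r : ℝ) (ω : Ω),
      ∑ i, ![p, q, r] i * ν i ω = p * ν₁ ω + q * ν₂ ω + r * νY ω := by
    simp [ν, Fin.sum_univ_three]
  have hX₂' : X₂ = fun ω => ∑ i, ![a, 1, 0] i * ν i ω := by
    ext ω; simp only [hcoords, hX₂]; ring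
  have hY' : Y = fun ω => ∑ i, ![b + c * a, c, 1] i * ν i ω := by
    ext ω; simp only [hcoords, hY, hX₂]; ring
  have hres : ∀ ω, Y ω - c * X₂ ω = ∑ i, ![b, 0, 1] i * ν i ω := by
    intro ω; simp only [hcoords, hY]; ring
  have gram := integral_sum_mul_sum_of_orthonormal hL2 horth
  have hcross : ∫ ω, X₂ ω * Y ω ∂μ = a * (b + c * a) + c := by
    rw [hX₂', hY', gram]; simp [Fin.sum_univ_three]
  have hX₂sq : ∫ ω, X₂ ω ^ 2 ∂μ = a ^ 2 + 1 := by
    simp_rw [sq, hX₂', gram]; simp [Fin.sum_univ_three]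
  have hrisk : ∫ ω, (Y ω - c * X₂ ω) ^ 2 ∂μ = b ^ 2 + 1 := by
    simp_rw [sq, hres, gram]; simp [Fin.sum_univ_three]
  have hvar : variance Y μ = (b + c * a) ^ 2 + c ^ 2 + 1 := by
    rw [hY', variance_sum_of_orthonormal hL2 hmean horth]; simp [Fin.sum_univ_three]
  refine ⟨?_, hrisk, by rw [hvar]; ring, fun ha => ?_, fun τ hτ => ⟨2 * τ, 1, one_ne_zero, ?_⟩⟩
  · rw [hcross, hX₂sq]; field_simp; ring
  · have hac : a * c = -b := by rw [ha]; field_simp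
    rw [hrisk, hvar]; congr 1; linear_combination (a * c + b) * hac
  · rw [gt_iff_lt, lt_div_iff₀ (by positivity)]; nlinarith
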